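/- Let φ be a star coloring of the splitting graph S(C_n) (n ≥ 6) using k colors. If there exists an index i with φ(v_i) = φ(v_{i+2}) = φ(v_{i+4}), then k ≥ 5. -/

import Mathlib

open SimpleGraph

/-- The cycle graph on `n` vertices, with vertex set `ZMod n` and edges `{i, i+1}`. -/
def zmodCycleGraph (n : ℕ) : SimpleGraph (ZMod n) where
  Adj i j := i ≠ j ∧ (j = i + 1 ∨ i = j + 1)
  symm := ⟨by intro i j h; exact ⟨h.1.symm, h.2.symm⟩⟩
  loopless := ⟨by intro i h; exact h.1 rfl⟩

/-- The splitting graph of the cycle `C_n`: vertices `inl i` are the cycle vertices `v_i`,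
vertices `inr i` are the added vertices `v_i'`, with `v_i'` adjacent to `v_{i-1}` and `v_{i+1}`. -/
def splitCycle (n : ℕ) : SimpleGraph (ZMod n ⊕ ZMod n) where
  Adj u v :=
    match u, v with
    | .inl i, .inl j => i ≠ j ∧ (j = i + 1 ∨ i = j + 1)
    | .inl i, .inr j => i = j + 1 ∨ j = i + 1
    | .inr i, .inl j => j = i + 1 ∨ i = j + 1
    | .inr _, .inr _ => False
  symm := ⟨by
    rintro (i | i) (j | j) h
    · exact ⟨h.1.symm, h.2.symm⟩
    · exact h
    · exact h
    · exact h.elim⟩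
  loopless := ⟨by
    rintro (i | i) h
    · exact h.1 rfl
    · exact h⟩

/-- A star coloring: a proper vertex coloring such that no path on 4 vertices is 2-colored. -/
def IsStarColoring {V α : Type*} (G : SimpleGraph V) (c : V → α) : Prop :=
  (∀ u v, G.Adj u v → c u ≠ c v) ∧
  ∀ w x y z, G.Adj w x → G.Adj x y → G.Adj y z → w ≠ y → x ≠ z → w ≠ z →
    ¬(c w = c y ∧ c x = c z)

/-- The star chromatic number: the least `k` admitting a star coloring with `k` colors. -/
noncomputable def starChromaticNumber {V : Type*} (G : SimpleGraph V) : ℕ :=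
  sInf {k | ∃ c : V → Fin k, IsStarColoring G c}

theorem stmt_13 (n k : ℕ) (hn : 6 ≤ n) (c : ZMod n ⊕ ZMod n → Fin k)
    (hc : IsStarColoring (splitCycle n) c) (i : ZMod n)
    (h1 : c (.inl i) = c (.inl (i + 2))) (h2 : c (.inl (i + 2)) = c (.inl (i + 4))) :
    5 ≤ k := by
  haveI : NeZero n := ⟨by omega⟩
  have hcast : ∀ m : ℕ, 0 < m → m < n → ((m : ZMod n) ≠ 0) := by
    intro m hm0 hmn h
    have hdvd : n ∣ m := (ZMod.natCast_eq_zero_iff m n).mp h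
    have := Nat.le_of_dvd hm0 hdvd
    omega
  have keyne : ∀ a b : ZMod n, b - a ≠ 0 → i + a ≠ i + b := by
    intro a b hne h
    exact hne (sub_eq_zero.mpr (add_left_cancel h).symm)
  have ne1 : (1 : ZMod n) ≠ 0 := by
    have := hcast 1 (by omega) (by omega); simpa using this
  have ne2 : (2 : ZMod n) ≠ 0 := by
    have := hcast 2 (by omega) (by omega); simpa using this
  have ne3 : (3 : ZMod n) ≠ 0 := by
    have := hcast 3 (by omega) (by omega); simpa using this
  have ne0_1 : i ≠ i + 1 := by simpa using keyne 0 1 (by simpa using ne1)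
  have ne0_2 : i ≠ i + 2 := by simpa using keyne 0 2 (by simpa using ne2)
  have ne0_3 : i ≠ i + 3 := by simpa using keyne 0 3 (by simpa using ne3)
  have ne1_2 : i + 1 ≠ i + 2 := keyne 1 2 (by norm_num; exact ne1)
  have ne1_3 : i + 1 ≠ i + 3 := keyne 1 3 (by norm_num; exact ne2)
  have ne2_3 : i + 2 ≠ i + 3 := keyne 2 3 (by norm_num; exact ne1)
  have ne2_4 : i + 2 ≠ i + 4 := keyne 2 4 (by norm_num; exact ne2)
  have ne3_4 : i + 3 ≠ i + 4 := keyne 3 4 (by norm_num; exact ne1)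
  -- adjacencies
  have a12 : (splitCycle n).Adj (.inl (i+1)) (.inl (i+2)) := ⟨ne1_2, Or.inl (by ring)⟩
  have a23 : (splitCycle n).Adj (.inl (i+2)) (.inl (i+3)) := ⟨ne2_3, Or.inl (by ring)⟩
  have a01 : (splitCycle n).Adj (.inl i) (.inl (i+1)) := ⟨ne0_1, Or.inl (by ring)⟩
  have a34 : (splitCycle n).Adj (.inl (i+3)) (.inl (i+4)) := ⟨ne3_4, Or.inl (by ring)⟩
  have a21 : (splitCycle n).Adj (.inl (i+2)) (.inl (i+1)) := ⟨ne1_2.symm, Or.inr (by ring)⟩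
  have a10 : (splitCycle n).Adj (.inl (i+1)) (.inl i) := ⟨ne0_1.symm, Or.inr (by ring)⟩
  have a43 : (splitCycle n).Adj (.inl (i+4)) (.inl (i+3)) := ⟨ne3_4.symm, Or.inr (by ring)⟩
  have a32 : (splitCycle n).Adj (.inl (i+3)) (.inl (i+2)) := ⟨ne2_3.symm, Or.inr (by ring)⟩
  have aR1_2 : (splitCycle n).Adj (.inr (i+1)) (.inl (i+2)) := Or.inl (by ring)
  have aR3_2 : (splitCycle n).Adj (.inr (i+3)) (.inl (i+2)) := Or.inr (by ring)
  have aR3_4 : (splitCycle n).Adj (.inr (i+3)) (.inl (i+4)) := Or.inl (by ring)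
  have a2_R3 : (splitCycle n).Adj (.inl (i+2)) (.inr (i+3)) := Or.inr (by ring)
  -- the five colors
  set c0 := c (.inl (i+2)) with hc0
  set c1 := c (.inl (i+1)) with hc1
  set c2 := c (.inl (i+3)) with hc2
  set c3 := c (.inr (i+1)) with hc3
  set c4 := c (.inr (i+3)) with hc4
  have d01 : c0 ≠ c1 := (hc.1 _ _ a12).symm
  have d02 : c0 ≠ c2 := hc.1 _ _ a23
  have d03 : c0 ≠ c3 := (hc.1 _ _ aR1_2).symm
  have d04 : c0 ≠ c4 := hc.1 _ _ a2_R3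
  have d12 : c1 ≠ c2 := by
    intro h
    exact hc.2 (.inl i) (.inl (i+1)) (.inl (i+2)) (.inl (i+3)) a01 a12 a23
      (by simpa using ne0_2) (by simpa using ne1_3) (by simpa using ne0_3) ⟨h1, h⟩
  have d13 : c1 ≠ c3 := by
    intro h
    exact hc.2 (.inr (i+1)) (.inl (i+2)) (.inl (i+1)) (.inl i) aR1_2 a21 a10
      (by simp) (by simpa using ne0_2.symm) (by simp) ⟨h.symm, h1.symm⟩
  have d23 : c2 ≠ c3 := by
    intro h
    exact hc.2 (.inr (i+1)) (.inl (i+2)) (.inl (i+3)) (.inl (i+4)) aR1_2 a23 a34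
      (by simp) (by simpa using ne2_4) (by simp) ⟨h.symm, h2⟩
  have d14 : c1 ≠ c4 := by
    intro h
    exact hc.2 (.inr (i+3)) (.inl (i+2)) (.inl (i+1)) (.inl i) aR3_2 a21 a10
      (by simp) (by simpa using ne0_2.symm) (by simp) ⟨h.symm, h1.symm⟩
  have d24 : c2 ≠ c4 := by
    intro h
    exact hc.2 (.inr (i+3)) (.inl (i+4)) (.inl (i+3)) (.inl (i+2)) aR3_4 a43 a32
      (by simp) (by simpa using ne2_4.symm) (by simp) ⟨h.symm, h2.symm⟩
  have d34 : c3 ≠ c4 := by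
    intro h
    exact hc.2 (.inr (i+1)) (.inl (i+2)) (.inr (i+3)) (.inl (i+4)) aR1_2 a2_R3 aR3_4
      (by simpa using ne1_3) (by simpa using ne2_4) (by simp) ⟨h, h2⟩
  have hcard : ({c0, c1, c2, c3, c4} : Finset (Fin k)).card = 5 := by
    rw [Finset.card_insert_of_notMem (by simp [d01, d02, d03, d04]),
        Finset.card_insert_of_notMem (by simp [d12, d13, d14]),
        Finset.card_insert_of_notMem (by simp [d23, d24]),
        Finset.card_insert_of_notMem (by simp [d34]),
        Finset.card_singleton]
  calc 5 = ({c0, c1, c2, c3, c4} : Finset (Fin k)).card := hcard.symm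
    _ ≤ (Finset.univ : Finset (Fin k)).card := Finset.card_le_card (Finset.subset_univ _)
    _ = k := by simp
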